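/- For every N ≥ 1 there exist two datasets of predictive distributions of size N, given by probability vectors q_1,...,q_N and q'_1,...,q'_N on the finite class set {0,1,2} together with labels y_1,...,y_N ∈ {0,1,2} with q_i(y_i) > 0 and q'_i(y_i) > 0 for all i, such that the average negative log-likelihood strictly decreases, (1/N) ∑_{i=1}^N -log q'_i(y_i) < (1/N) ∑_{i=1}^N -log q_i(y_i), while the average Shannon entropy strictly increases, (1/N) ∑_{i=1}^N H(q'_i) > (1/N) ∑_{i=1}^N H(q_i). Hence the implication 'NLL(D') < NLL(D) ⟹ H(D') < H(D)' fails at every dataset size. -/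
import Mathlib


/-- For every dataset size `N ≥ 1` there exist two datasets of
predictive distributions on `Fin 3` (with labels) such that the average
negative log-likelihood strictly decreases while the average Shannon entropy
strictly increases. -/
theorem avg_nll_decrease_not_imp_avg_entropy_decrease :
    ∀ N : ℕ, 1 ≤ N →
      ∃ (q q' : Fin N → Fin 3 → ℝ) (y : Fin N → Fin 3),
        (∀ i c, 0 ≤ q i c) ∧ (∀ i, ∑ c, q i c = 1) ∧
        (∀ i c, 0 ≤ q' i c) ∧ (∀ i, ∑ c, q' i c = 1) ∧
        (∀ i, 0 < q i (y i)) ∧ (∀ i, 0 < q' i (y i)) ∧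
        (1 / (N : ℝ)) * ∑ i, -Real.log (q' i (y i))
          < (1 / (N : ℝ)) * ∑ i, -Real.log (q i (y i)) ∧
        (1 / (N : ℝ)) * ∑ i, (-∑ c, q' i c * Real.log (q' i c))
          > (1 / (N : ℝ)) * ∑ i, (-∑ c, q i c * Real.log (q i c)) := by
  intro N hN
  have hNpos : (0:ℝ) < N := by exact_mod_cast hN
  have hinv : (0:ℝ) < 1 / N := by positivity
  refine ⟨fun _ => ![1/2, 1/2, 0], fun _ => ![3/5, 1/5, 1/5], fun _ => 0,
    ?_, ?_, ?_, ?_, ?_, ?_, ?_, ?_⟩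
  · intro i c; fin_cases c <;> norm_num
  · intro i; simp [Fin.sum_univ_three]; norm_num
  · intro i c; fin_cases c <;> norm_num
  · intro i; simp [Fin.sum_univ_three]; norm_num
  · intro i; norm_num
  · intro i; norm_num
  · -- NLL
    have h : -Real.log ((3:ℝ)/5) < -Real.log ((1:ℝ)/2) := by
      have := Real.log_lt_log (by norm_num : (0:ℝ) < 1/2) (by norm_num : (1:ℝ)/2 < 3/5)
      linarith
    simp only [Matrix.cons_val_zero, Finset.sum_const, Finset.card_univ, Fintype.card_fin,
      nsmul_eq_mul]
    exact mul_lt_mul_of_pos_left (mul_lt_mul_of_pos_left h hNpos) hinv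
  · -- entropy
    have key : 5 * Real.log 2 + 3 * Real.log 3 < 5 * Real.log 5 := by
      have h1 : Real.log 864 = 5 * Real.log 2 + 3 * Real.log 3 := by
        rw [show (864:ℝ) = 2^5 * 3^3 by norm_num, Real.log_mul (by positivity) (by positivity),
          Real.log_pow, Real.log_pow]; push_cast; ring
      have h2 : Real.log 3125 = 5 * Real.log 5 := by
        rw [show (3125:ℝ) = 5^5 by norm_num, Real.log_pow]; push_cast; ring
      rw [← h1, ← h2]
      exact Real.log_lt_log (by norm_num) (by norm_num)
    have l12 : Real.log ((1:ℝ)/2) = -Real.log 2 := by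
      rw [one_div, Real.log_inv]
    have l35 : Real.log ((3:ℝ)/5) = Real.log 3 - Real.log 5 := by
      rw [Real.log_div (by norm_num) (by norm_num)]
    have l15 : Real.log ((1:ℝ)/5) = -Real.log 5 := by
      rw [one_div, Real.log_inv]
    have h : (-(1/2 * Real.log (1/2) + 1/2 * Real.log (1/2) + 0 * Real.log 0))
        < -(3/5 * Real.log (3/5) + 1/5 * Real.log (1/5) + 1/5 * Real.log (1/5)) := by
      rw [l12, l35, l15]; ring_nf; nlinarith [key]
    simp only [Fin.sum_univ_three, Matrix.cons_val_zero, Matrix.cons_val_one, Matrix.head_cons,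
      Matrix.cons_val_two, Matrix.tail_cons, Finset.sum_const, Finset.card_univ,
      Fintype.card_fin, nsmul_eq_mul, gt_iff_lt]
    exact mul_lt_mul_of_pos_left (mul_lt_mul_of_pos_left h hNpos) hinv
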